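/- Let y : ℝ^ℓ → ℝ^n be differentiable at x, let L : ℝ^n → ℝ be differentiable at y(x), and let dy = ∇L(y(x)) ≠ 0. Define φ(ξ) = ‖y(x - ξ) - y(x) + dy‖. Then φ is differentiable at 0 and its derivative at 0 in direction v equals -(1/‖dy‖) · ⟨∇(L ∘ y)(x), v⟩; in particular the directional derivative of φ at 0 is minimized (over unit vectors) in the direction ∇(L ∘ y)(x) / ‖∇(L ∘ y)(x)‖ when ∇(L ∘ y)(x) ≠ 0. -/

import Mathlib

/-!
Near `0` the map `ξ ↦ y(x - ξ) - y(x) + dy` stays close to `dy ≠ 0`, where the norm is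
differentiable with derivative `⟪dy, ·⟫ / ‖dy‖`. By the chain rule `⟪dy, Dy(x) v⟫` is
`⟪∇(L ∘ y)(x), v⟫`, and Cauchy–Schwarz shows that `⟪g, v⟫` is maximal among unit vectors at
`v = g / ‖g‖`.
-/

open scoped RealInnerProductSpace

section InnerProductSpace

variable {F : Type*} [NormedAddCommGroup F] [InnerProductSpace ℝ F]

theorem hasFDerivAt_norm_of_ne_zero {a : F} (ha : a ≠ 0) :
    HasFDerivAt (‖·‖) (‖a‖⁻¹ • innerSL ℝ a) a := by
  have h := (hasStrictFDerivAt_norm_sq a).hasFDerivAt.sqrt (by positivity)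
  simp only [Real.sqrt_sq (norm_nonneg _)] at h
  refine h.congr_fderiv (ContinuousLinearMap.ext fun v => ?_)
  simp only [smul_apply, coe_innerSL_apply, nsmul_eq_mul, Nat.cast_ofNat, smul_eq_mul]
  field_simp

theorem real_inner_le_inner_inv_norm_smul_self (g : F) {v : F} (hv : ‖v‖ = 1) :
    ⟪g, v⟫ ≤ ⟪g, ‖g‖⁻¹ • g⟫ := by
  rw [real_inner_smul_right, real_inner_self_eq_norm_sq]
  calc ⟪g, v⟫ ≤ ‖g‖ * ‖v‖ := real_inner_le_norm g v
    _ = ‖g‖⁻¹ * ‖g‖ ^ 2 := by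
      rcases eq_or_ne ‖g‖ 0 with h | h
      · simp [h]
      · field_simp
        rw [hv]

variable {E : Type*} [NormedAddCommGroup E] [NormedSpace ℝ E]

theorem HasFDerivAt.norm_comp_sub_sub_add {y : E → F} {y' : E →L[ℝ] F} {x : E}
    (hy : HasFDerivAt y y' x) {d : F} (hd : d ≠ 0) :
    HasFDerivAt (fun ξ => ‖y (x - ξ) - y x + d‖) (-(‖d‖⁻¹ • (innerSL ℝ d).comp y')) 0 := by
  have hreflect : HasFDerivAt (fun ξ : E => x - ξ) (-ContinuousLinearMap.id ℝ E) 0 :=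
    (hasFDerivAt_id 0).const_sub x
  have hshift : HasFDerivAt (fun ξ => y (x - ξ) - y x + d)
      (y'.comp (-ContinuousLinearMap.id ℝ E)) 0 :=
    ((HasFDerivAt.comp (f := fun ξ => x - ξ) 0 (by rwa [sub_zero]) hreflect).sub_const
      (y x)).add_const d
  have hnorm := HasFDerivAt.comp (0 : E) (g := (‖·‖))
    (by simpa using hasFDerivAt_norm_of_ne_zero hd) hshift
  exact hnorm.congr_fderiv (ContinuousLinearMap.ext fun v => by simp)

end InnerProductSpace

section Gradient

variable {E F : Type*} [NormedAddCommGroup E] [InnerProductSpace ℝ E] [CompleteSpace E]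
  [NormedAddCommGroup F] [InnerProductSpace ℝ F] [CompleteSpace F]

theorem inner_gradient_comp {L : F → ℝ} {y : E → F} {x : E}
    (hL : DifferentiableAt ℝ L (y x)) (hy : DifferentiableAt ℝ y x) (v : E) :
    ⟪gradient (fun ξ => L (y ξ)) x, v⟫ = ⟪gradient L (y x), fderiv ℝ y x v⟫ := by
  rw [inner_gradient_left, inner_gradient_left, ← Function.comp_def, fderiv_comp x hL hy]
  rfl

end Gradient

theorem stmt0 {l n : ℕ} (x : EuclideanSpace ℝ (Fin l))
    (y : EuclideanSpace ℝ (Fin l) → EuclideanSpace ℝ (Fin n))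
    (L : EuclideanSpace ℝ (Fin n) → ℝ)
    (hy : DifferentiableAt ℝ y x) (hL : DifferentiableAt ℝ L (y x))
    (hdy : gradient L (y x) ≠ 0) :
    ∃ f' : EuclideanSpace ℝ (Fin l) →L[ℝ] ℝ,
      HasFDerivAt (fun ξ => ‖y (x - ξ) - y x + gradient L (y x)‖) f' 0 ∧
      (∀ v, f' v = -(1 / ‖gradient L (y x)‖) * ⟪gradient (fun ξ => L (y ξ)) x, v⟫) ∧
      (gradient (fun ξ => L (y ξ)) x ≠ 0 →
        ∀ v : EuclideanSpace ℝ (Fin l), ‖v‖ = 1 →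
          f' ((‖gradient (fun ξ => L (y ξ)) x‖)⁻¹ • gradient (fun ξ => L (y ξ)) x) ≤ f' v) := by
  have hf' (v : EuclideanSpace ℝ (Fin l)) :
      (-(‖gradient L (y x)‖⁻¹ • (innerSL ℝ (gradient L (y x))).comp (fderiv ℝ y x))) v =
        -(1 / ‖gradient L (y x)‖) * ⟪gradient (fun ξ => L (y ξ)) x, v⟫ := by
    simp [inner_gradient_comp hL hy]
  refine ⟨_, hy.hasFDerivAt.norm_comp_sub_sub_add hdy, hf', fun _ v hv => ?_⟩
  rw [hf', hf', neg_mul, neg_mul, neg_le_neg_iff]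
  exact mul_le_mul_of_nonneg_left (real_inner_le_inner_inv_norm_smul_self _ hv) (by positivity)
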